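/- Let A, B, C, D partition X with sizes a, b, c, d, and let p_{AB} and p_{AC} be defined via the coefficient formulas (p_{AC} obtained from p_{AB} by swapping the roles of B and C). Then p_{AB}·p_{AC} = (−(bc+ad)/√((a+b)(a+c)(b+d)(c+d))) · ‖p_{AB}‖·‖p_{AC}‖; equivalently, the cosine of the angle between p_{AB} and p_{AC} is −(bc+ad)/√((a+b)(a+c)(b+d)(c+d)). -/

import Mathlib

open Finset
open scoped Classical

variable {X : Type*} [Fintype X] [DecidableEq X]

/-- Split pseudometric: coordinate at pair s is 1 if s meets both U and V, else 0. -/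
noncomputable def splitDelta (U V : Finset X) : EuclideanSpace ℝ (Sym2 X) :=
  WithLp.toLp 2 (fun s => if (∃ i ∈ s, i ∈ U) ∧ (∃ j ∈ s, j ∈ V) then (1 : ℝ) else 0)

/-!
A pair `{x, y}` meets at most two of the pairwise disjoint blocks, so the six split vectors
`δ_{U|V}` of the partition are pairwise orthogonal, with `‖δ_{U|V}‖² = |U| |V|`. In this
orthogonal frame the Gram matrix of `p_{AB}` and `p_{AC}` is a polynomial computation:
`⟪p_{AB}, p_{AC}⟫ = -(bc + ad) M`, `‖p_{AB}‖² = M (a + b)(c + d)` and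
`‖p_{AC}‖² = M (a + c)(b + d)` with `M = abcd ((a + b)(a + c)(b + d)(c + d) - (bc + ad)²) ≥ 0`.
When `(a + b)(a + c)(b + d)(c + d) = 0` also `M = 0`, so both sides vanish despite the junk
division by `√0 = 0`.
-/

open scoped RealInnerProductSpace

def Crosses {α : Type*} (U V : Finset α) (s : Sym2 α) : Prop :=
  (∃ i ∈ s, i ∈ U) ∧ (∃ j ∈ s, j ∈ V)

section Crosses

variable {α : Type*} {U V : Finset α} {s : Sym2 α}

lemma crosses_comm : Crosses U V s ↔ Crosses V U s :=
  and_comm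

lemma crosses_iff (h : Disjoint U V) : Crosses U V s ↔ ∃ i ∈ U, ∃ j ∈ V, s(i, j) = s := by
  constructor
  · rintro ⟨⟨i, hi, hiU⟩, ⟨j, hj, hjV⟩⟩
    have hij : i ≠ j := fun hij => disjoint_left.mp h hiU (hij ▸ hjV)
    exact ⟨i, hiU, j, hjV, ((Sym2.mem_and_mem_iff hij).mp ⟨hi, hj⟩).symm⟩
  · rintro ⟨i, hiU, j, hjV, rfl⟩
    exact ⟨⟨i, Sym2.mem_mk_left i j, hiU⟩, ⟨j, Sym2.mem_mk_right i j, hjV⟩⟩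

lemma Crosses.mem_or_mem (h : Disjoint U V) (hs : Crosses U V s) {z : α} (hz : z ∈ s) :
    z ∈ U ∨ z ∈ V := by
  obtain ⟨i, hiU, j, hjV, rfl⟩ := (crosses_iff h).mp hs
  rcases Sym2.mem_iff.mp hz with rfl | rfl
  exacts [Or.inl hiU, Or.inr hjV]

end Crosses

lemma card_crosses {U V : Finset X} (h : Disjoint U V) :
    #{s | Crosses U V s} = #U * #V := by
  have himage : ({s | Crosses U V s} : Finset (Sym2 X)) =
      (U ×ˢ V).image fun p : X × X => s(p.1, p.2) := by
    ext s
    simp [crosses_iff h, and_assoc]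
  rw [himage, card_image_of_injOn, card_product]
  rintro ⟨i, j⟩ hij ⟨i', j'⟩ hij' heq
  simp only [coe_product, Set.mem_prod, mem_coe] at hij hij'
  rcases Sym2.mk_eq_mk_iff.mp heq with heq | heq
  · exact heq
  · simp only [Prod.swap_prod_mk, Prod.mk.injEq] at heq
    exact absurd (heq.1 ▸ hij'.2) (disjoint_left.mp h hij.1)

lemma splitDelta_apply (U V : Finset X) (s : Sym2 X) :
    splitDelta U V s = if Crosses U V s then 1 else 0 :=
  if_congr Iff.rfl rfl rfl

lemma splitDelta_comm (U V : Finset X) : splitDelta U V = splitDelta V U := by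
  ext s
  simp only [splitDelta_apply, crosses_comm]

lemma inner_splitDelta (U V W Z : Finset X) :
    ⟪splitDelta U V, splitDelta W Z⟫ = #{s | Crosses U V s ∧ Crosses W Z s} := by
  simp [PiLp.inner_apply, splitDelta_apply, ← ite_and, Finset.sum_boole]

lemma norm_splitDelta_sq {U V : Finset X} (h : Disjoint U V) :
    ‖splitDelta U V‖ ^ 2 = #U * #V := by
  rw [← real_inner_self_eq_norm_sq, inner_splitDelta]
  simp only [and_self, card_crosses h, Nat.cast_mul]

lemma inner_splitDelta_eq_zero_of_right {U V Z : Finset X} (hUV : Disjoint U V)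
    (hZU : Disjoint Z U) (hZV : Disjoint Z V) (W : Finset X) :
    ⟪splitDelta U V, splitDelta W Z⟫ = 0 := by
  rw [inner_splitDelta, Nat.cast_eq_zero, card_eq_zero, filter_eq_empty_iff]
  rintro s - ⟨hs, -, z, hz, hzZ⟩
  rcases hs.mem_or_mem hUV hz with h | h
  exacts [disjoint_left.mp hZU hzZ h, disjoint_left.mp hZV hzZ h]

lemma inner_splitDelta_eq_zero_of_left {U V W : Finset X} (hUV : Disjoint U V)
    (hWU : Disjoint W U) (hWV : Disjoint W V) (Z : Finset X) :
    ⟪splitDelta U V, splitDelta W Z⟫ = 0 := by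
  rw [splitDelta_comm W Z]
  exact inner_splitDelta_eq_zero_of_right hUV hWU hWV Z

section InnerProductSpace

variable {ι E : Type*} [Fintype ι] [NormedAddCommGroup E] [InnerProductSpace ℝ E]

lemma inner_sum_smul_sum_smul_of_pairwise_orthogonal {v : ι → E}
    (hv : Pairwise fun i j => ⟪v i, v j⟫ = 0) (x y : ι → ℝ) :
    ⟪∑ i, x i • v i, ∑ i, y i • v i⟫ = ∑ i, x i * y i * ‖v i‖ ^ 2 := by
  simp only [sum_inner, inner_sum, real_inner_smul_left, real_inner_smul_right]
  refine sum_congr rfl fun i _ => ?_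
  rw [sum_eq_single i (fun j _ hji => by rw [hv hji, mul_zero, mul_zero]) (by simp),
    real_inner_self_eq_norm_sq]
  ring

lemma inner_eq_div_sqrt_mul_norm_mul_norm {x y : E} {s M P : ℝ} (hM : 0 ≤ M)
    (hMP : M = 0 ∨ 0 < P) (hxy : ⟪x, y⟫ = s * M) (hnorm : ‖x‖ ^ 2 * ‖y‖ ^ 2 = M ^ 2 * P) :
    ⟪x, y⟫ = s / √P * (‖x‖ * ‖y‖) := by
  have hxy_norm : ‖x‖ * ‖y‖ = M * √P := by
    rw [← Real.sqrt_sq (by positivity : 0 ≤ ‖x‖ * ‖y‖), mul_pow, hnorm,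
      Real.sqrt_mul (sq_nonneg M), Real.sqrt_sq hM]
  rw [hxy, hxy_norm]
  rcases hMP with rfl | hP
  · simp
  · field_simp [(Real.sqrt_pos.mpr hP).ne']

end InnerProductSpace

def quartetWeight (a b c d : ℝ) : ℝ :=
  a * b * c * d * ((a + b) * (a + c) * (b + d) * (c + d) - (b * c + a * d) ^ 2)

section QuartetWeight

variable {a b c d : ℝ}

lemma quartetWeight_nonneg (ha : 0 ≤ a) (hb : 0 ≤ b) (hc : 0 ≤ c) (hd : 0 ≤ d) :
    0 ≤ quartetWeight a b c d := by
  have hsum : (a + b) * (a + c) * (b + d) * (c + d) - (b * c + a * d) ^ 2 =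
      (a * d + b * c) * (a * b + a * c + b * d + c * d) + (a * c + b * d) * (a * b + c * d) := by
    ring
  rw [quartetWeight, hsum]
  positivity

lemma quartetWeight_eq_zero_or_pos (ha : 0 ≤ a) (hb : 0 ≤ b) (hc : 0 ≤ c) (hd : 0 ≤ d) :
    quartetWeight a b c d = 0 ∨ 0 < (a + b) * (a + c) * (b + d) * (c + d) := by
  rcases (by positivity : 0 ≤ (a + b) * (a + c) * (b + d) * (c + d)).eq_or_lt with hP | hP
  · left
    have hnonneg := quartetWeight_nonneg ha hb hc hd
    rw [quartetWeight, ← hP] at hnonneg ⊢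
    exact le_antisymm (mul_nonpos_of_nonneg_of_nonpos (by positivity)
      (sub_nonpos.mpr (sq_nonneg _))) hnonneg
  · exact Or.inr hP

end QuartetWeight

noncomputable def quartetSplits (A B C D : Finset X) : Fin 6 → EuclideanSpace ℝ (Sym2 X) :=
  ![splitDelta A B, splitDelta A C, splitDelta A D, splitDelta B C, splitDelta B D, splitDelta C D]

/-- `p_{AB}` for the partition `A, B, C, D`; the paper's `p_{AC}` is `quartetVector A C B D`. -/
noncomputable def quartetVector (A B C D : Finset X) : EuclideanSpace ℝ (Sym2 X) :=
  let a : ℝ := A.card; let b : ℝ := B.card; let c : ℝ := C.card; let d : ℝ := D.card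
  ((a + b) * c * d * (c + d)) • splitDelta A B +
    (-(b * d * (b * c + a * d))) • splitDelta A C +
    (-(b * c * (a * c + b * d))) • splitDelta A D +
    (-(a * d * (a * c + b * d))) • splitDelta B C +
    (-(a * c * (b * c + a * d))) • splitDelta B D +
    (a * b * (a + b) * (c + d)) • splitDelta C D

lemma inner_sum_quartetSplits {A B C D : Finset X}
    (hAB : Disjoint A B) (hAC : Disjoint A C) (hAD : Disjoint A D)
    (hBC : Disjoint B C) (hBD : Disjoint B D) (hCD : Disjoint C D) (x y : Fin 6 → ℝ) :
    ⟪∑ i, x i • quartetSplits A B C D i, ∑ i, y i • quartetSplits A B C D i⟫ =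
      x 0 * y 0 * (#A * #B) + x 1 * y 1 * (#A * #C) + x 2 * y 2 * (#A * #D) +
        x 3 * y 3 * (#B * #C) + x 4 * y 4 * (#B * #D) + x 5 * y 5 * (#C * #D) := by
  have := hAB.symm; have := hAC.symm; have := hAD.symm
  have := hBC.symm; have := hBD.symm; have := hCD.symm
  have horth : Pairwise fun i j => ⟪quartetSplits A B C D i, quartetSplits A B C D j⟫ = 0 := by
    intro i j hij
    fin_cases i <;> fin_cases j <;>
      first
      | exact absurd rfl hij
      | exact inner_splitDelta_eq_zero_of_right ‹_› ‹_› ‹_› _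
      | exact inner_splitDelta_eq_zero_of_left ‹_› ‹_› ‹_› _
  rw [inner_sum_smul_sum_smul_of_pairwise_orthogonal horth, Fin.sum_univ_six]
  simp only [quartetSplits, Matrix.cons_val]
  rw [norm_splitDelta_sq hAB, norm_splitDelta_sq hAC, norm_splitDelta_sq hAD,
    norm_splitDelta_sq hBC, norm_splitDelta_sq hBD, norm_splitDelta_sq hCD]

lemma quartetVector_eq_sum (A B C D : Finset X) :
    quartetVector A B C D = ∑ i, (![(#A + #B) * #C * #D * (#C + #D),
      -(#B * #D * (#B * #C + #A * #D)), -(#B * #C * (#A * #C + #B * #D)),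
      -(#A * #D * (#A * #C + #B * #D)), -(#A * #C * (#B * #C + #A * #D)),
      #A * #B * (#A + #B) * (#C + #D)] : Fin 6 → ℝ) i • quartetSplits A B C D i := by
  simp [quartetVector, quartetSplits, Fin.sum_univ_six]

lemma quartetVector_swap_eq_sum (A B C D : Finset X) :
    quartetVector A C B D = ∑ i, (![-(#C * #D * (#C * #B + #A * #D)),
      (#A + #C) * #B * #D * (#B + #D), -(#C * #B * (#A * #B + #C * #D)),
      -(#A * #D * (#A * #B + #C * #D)), #A * #C * (#A + #C) * (#B + #D),
      -(#A * #B * (#C * #B + #A * #D))] : Fin 6 → ℝ) i • quartetSplits A B C D i := by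
  simp only [quartetVector, quartetSplits, Fin.sum_univ_six, splitDelta_comm C B, neg_smul,
    Matrix.cons_val]
  abel

lemma norm_quartetVector_sq {A B C D : Finset X}
    (hAB : Disjoint A B) (hAC : Disjoint A C) (hAD : Disjoint A D)
    (hBC : Disjoint B C) (hBD : Disjoint B D) (hCD : Disjoint C D) :
    ‖quartetVector A B C D‖ ^ 2 = quartetWeight #A #B #C #D * ((#A + #B) * (#C + #D)) := by
  rw [← real_inner_self_eq_norm_sq, quartetVector_eq_sum,
    inner_sum_quartetSplits hAB hAC hAD hBC hBD hCD]
  simp only [quartetWeight, Matrix.cons_val]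
  ring

lemma inner_quartetVector_swap {A B C D : Finset X}
    (hAB : Disjoint A B) (hAC : Disjoint A C) (hAD : Disjoint A D)
    (hBC : Disjoint B C) (hBD : Disjoint B D) (hCD : Disjoint C D) :
    ⟪quartetVector A B C D, quartetVector A C B D⟫ =
      -(#B * #C + #A * #D) * quartetWeight #A #B #C #D := by
  rw [quartetVector_eq_sum, quartetVector_swap_eq_sum,
    inner_sum_quartetSplits hAB hAC hAD hBC hBD hCD]
  simp only [quartetWeight, Matrix.cons_val]
  ring

theorem cos_angle_pAB_pAC_general (A B C D : Finset X)
    (hAB : Disjoint A B) (hAC : Disjoint A C) (hAD : Disjoint A D)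
    (hBC : Disjoint B C) (hBD : Disjoint B D) (hCD : Disjoint C D) :
    let a : ℝ := A.card; let b : ℝ := B.card; let c : ℝ := C.card; let d : ℝ := D.card
    let pAB := (((a + b) * c * d * (c + d)) • splitDelta A B +
        (-(b * d * (b * c + a * d))) • splitDelta A C +
        (-(b * c * (a * c + b * d))) • splitDelta A D +
        (-(a * d * (a * c + b * d))) • splitDelta B C +
        (-(a * c * (b * c + a * d))) • splitDelta B D +
        (a * b * (a + b) * (c + d)) • splitDelta C D : EuclideanSpace ℝ (Sym2 X))
    let pAC := (((a + c) * b * d * (b + d)) • splitDelta A C +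
        (-(c * d * (b * c + a * d))) • splitDelta A B +
        (-(c * b * (a * b + c * d))) • splitDelta A D +
        (-(a * d * (a * b + c * d))) • splitDelta C B +
        (-(a * b * (b * c + a * d))) • splitDelta C D +
        (a * c * (a + c) * (b + d)) • splitDelta B D : EuclideanSpace ℝ (Sym2 X))
    (inner ℝ pAB pAC : ℝ) =
      (-(b * c + a * d) / Real.sqrt ((a + b) * (a + c) * (b + d) * (c + d))) *
        (‖pAB‖ * ‖pAC‖) := by
  intro a b c d pAB pAC
  have hpAB : pAB = quartetVector A B C D := rfl
  have hpAC : pAC = quartetVector A C B D := by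
    simp only [pAC, quartetVector, a, b, c, d, mul_comm (#B : ℝ) #C]
  have ha : 0 ≤ a := Nat.cast_nonneg _
  have hb : 0 ≤ b := Nat.cast_nonneg _
  have hc : 0 ≤ c := Nat.cast_nonneg _
  have hd : 0 ≤ d := Nat.cast_nonneg _
  refine inner_eq_div_sqrt_mul_norm_mul_norm (quartetWeight_nonneg ha hb hc hd)
    (quartetWeight_eq_zero_or_pos ha hb hc hd) ?_ ?_
  · rw [hpAB, hpAC, inner_quartetVector_swap hAB hAC hAD hBC hBD hCD]
  · rw [hpAB, hpAC, norm_quartetVector_sq hAB hAC hAD hBC hBD hCD,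
      norm_quartetVector_sq hAC hAB hAD hBC.symm hCD hBD]
    simp only [quartetWeight]
    ring

/-- The cosine of the angle between p_{AB} and p_{AC} is
−(bc+ad)/√((a+b)(a+c)(b+d)(c+d)). -/
theorem cos_angle_pAB_pAC (A B C D : Finset X)
    (hA : A.Nonempty) (hB : B.Nonempty) (hC : C.Nonempty) (hD : D.Nonempty)
    (hAB : Disjoint A B) (hAC : Disjoint A C) (hAD : Disjoint A D)
    (hBC : Disjoint B C) (hBD : Disjoint B D) (hCD : Disjoint C D)
    (hcover : A ∪ B ∪ C ∪ D = Finset.univ) :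
    let a : ℝ := A.card; let b : ℝ := B.card; let c : ℝ := C.card; let d : ℝ := D.card
    let pAB := (((a + b) * c * d * (c + d)) • splitDelta A B +
        (-(b * d * (b * c + a * d))) • splitDelta A C +
        (-(b * c * (a * c + b * d))) • splitDelta A D +
        (-(a * d * (a * c + b * d))) • splitDelta B C +
        (-(a * c * (b * c + a * d))) • splitDelta B D +
        (a * b * (a + b) * (c + d)) • splitDelta C D : EuclideanSpace ℝ (Sym2 X))
    let pAC := (((a + c) * b * d * (b + d)) • splitDelta A C +
        (-(c * d * (b * c + a * d))) • splitDelta A B +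
        (-(c * b * (a * b + c * d))) • splitDelta A D +
        (-(a * d * (a * b + c * d))) • splitDelta C B +
        (-(a * b * (b * c + a * d))) • splitDelta C D +
        (a * c * (a + c) * (b + d)) • splitDelta B D : EuclideanSpace ℝ (Sym2 X))
    (inner ℝ pAB pAC : ℝ) =
      (-(b * c + a * d) / Real.sqrt ((a + b) * (a + c) * (b + d) * (c + d))) *
        (‖pAB‖ * ‖pAC‖) :=
  cos_angle_pAB_pAC_general A B C D hAB hAC hAD hBC hBD hCD
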